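/- For a list L = ⟨ℓ₁,…,ℓₙ⟩ of positive integers, let αᵢ = min(ℓᵢ₋₁, ℓᵢ) for 2 ≤ i ≤ n, let trunc(i,x) = ⌊2ⁱ·x⌋/2ⁱ, and define sum(L,1) = 0 and sum(L,i) = trunc(αᵢ, sum(L,i−1)) + 2^(−αᵢ) for i ≥ 2. Then there exists a binary alphabetic code with codeword lengths ℓ₁,…,ℓₙ if and only if sum(L,n) < 1. -/

import Mathlib

/-- No codeword is a prefix of another. -/
def PrefixFree {n : ℕ} (w : Fin n → List Bool) : Prop :=
  ∀ i j : Fin n, i ≠ j → ¬ (w i <+: w j)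

/-- The codewords are strictly increasing in the lexicographic order on binary strings. -/
def LexIncreasing {n : ℕ} (w : Fin n → List Bool) : Prop :=
  ∀ i j : Fin n, i < j → List.Lex (· < ·) (w i) (w j)

/-- A binary alphabetic code: prefix-free and lexicographically increasing codewords. -/
def IsAlphabeticCode {n : ℕ} (w : Fin n → List Bool) : Prop :=
  PrefixFree w ∧ LexIncreasing w


/-- Truncation of the binary expansion of x at the i-th bit. -/
noncomputable def trunc (i : ℕ) (x : ℝ) : ℝ := ⌊(2 : ℝ) ^ i * x⌋ / (2 : ℝ) ^ i

/-- Nakatsu's quantity sum(L,i), where ℓ i is the i-th length (1-indexed) and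
αᵢ = min(ℓᵢ₋₁, ℓᵢ). -/
noncomputable def nsum (ℓ : ℕ → ℕ) : ℕ → ℝ
  | 0 => 0
  | 1 => 0
  | i + 2 => trunc (min (ℓ (i + 1)) (ℓ (i + 2))) (nsum ℓ (i + 1)) +
      (2 : ℝ) ^ (-(min (ℓ (i + 1)) (ℓ (i + 2)) : ℤ))

def bval : List Bool → ℕ
  | [] => 0
  | b :: t => (cond b 1 0) * 2 ^ t.length + bval t

theorem bval_lt (u : List Bool) : bval u < 2 ^ u.length := by
  induction u with
  | nil => simp [bval]
  | cons b t ih =>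
    simp only [bval, List.length_cons, pow_succ]
    cases b <;> simp <;> omega

/-- Core condition: interval of u lies strictly left of interval of v. -/
def Csep (u v : List Bool) : Prop :=
  (bval u + 1) * 2 ^ v.length ≤ bval v * 2 ^ u.length

theorem csep_good (u : List Bool) : ∀ v : List Bool, Csep u v →
    List.Lex (· < ·) u v ∧ ¬ (u <+: v) ∧ ¬ (v <+: u) := by
  induction u with
  | nil =>
    intro v h
    exfalso
    have := bval_lt v
    simp [Csep, bval] at h
    omega
  | cons a t ih =>
    intro v h
    cases v with
    | nil => exfalso; simp [Csep, bval] at h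
    | cons b s =>
      have hu := bval_lt t
      have hv := bval_lt s
      simp only [Csep, bval, List.length_cons, pow_succ] at h
      cases a <;> cases b <;> simp only [cond] at h
      · -- a = false, b = false
        have h' : Csep t s := by
          simp only [Csep]; nlinarith [pow_pos (by norm_num : (0:ℕ) < 2) t.length,
            pow_pos (by norm_num : (0:ℕ) < 2) s.length]
        obtain ⟨h1, h2, h3⟩ := ih s h'
        exact ⟨List.Lex.cons h1, by simp [h2], by simp [h3]⟩
      · -- a = false, b = true
        refine ⟨List.Lex.rel (by simp), ?_, ?_⟩ <;> simp [List.cons_prefix_cons]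
      · -- a = true, b = false : contradiction
        exfalso; nlinarith [pow_pos (by norm_num : (0:ℕ) < 2) t.length,
          pow_pos (by norm_num : (0:ℕ) < 2) s.length]
      · -- a = true, b = true
        have h' : Csep t s := by
          simp only [Csep]; nlinarith [pow_pos (by norm_num : (0:ℕ) < 2) t.length,
            pow_pos (by norm_num : (0:ℕ) < 2) s.length]
        obtain ⟨h1, h2, h3⟩ := ih s h'
        exact ⟨List.Lex.cons h1, by simp [h2], by simp [h3]⟩

theorem good_csep (u : List Bool) : ∀ v : List Bool,
    List.Lex (· < ·) u v → ¬ (u <+: v) → ¬ (v <+: u) → Csep u v := by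
  induction u with
  | nil => intro v hl hp _; exact absurd (List.nil_prefix) hp
  | cons a t ih =>
    intro v hl hp hq
    cases v with
    | nil => exact absurd hl (by intro h; cases h)
    | cons b s =>
      have hu := bval_lt t
      have hv := bval_lt s
      simp only [Csep, bval, List.length_cons, pow_succ]
      cases hl with
      | cons h1 =>
        have h' := ih s h1 (fun h => hp (by simp [List.cons_prefix_cons, h]))
          (fun h => hq (by simp [List.cons_prefix_cons, h]))
        simp only [Csep] at h'
        cases a <;> simp <;> nlinarith [pow_pos (by norm_num : (0:ℕ) < 2) t.length,
          pow_pos (by norm_num : (0:ℕ) < 2) s.length]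
      | rel hab =>
        rw [Bool.lt_iff] at hab
        obtain ⟨ha, hb⟩ := hab
        subst ha hb
        simp only [cond]
        nlinarith [pow_pos (by norm_num : (0:ℕ) < 2) t.length,
          pow_pos (by norm_num : (0:ℕ) < 2) s.length]

/-- The word of length `a` with value `m` (msb first). -/
def bword : ℕ → ℕ → List Bool
  | 0, _ => []
  | a + 1, m => decide (2 ^ a ≤ m) :: bword a (m % 2 ^ a)

theorem bword_length (a m : ℕ) : (bword a m).length = a := by
  induction a generalizing m with
  | zero => rfl
  | succ a ih => simp [bword, ih]

theorem bword_bval (a : ℕ) : ∀ m : ℕ, m < 2 ^ a → bval (bword a m) = m := by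
  induction a with
  | zero => intro m hm; interval_cases m; rfl
  | succ a ih =>
    intro m hm
    have h2 : (0:ℕ) < 2 ^ a := pow_pos (by norm_num) a
    simp only [bword, bval, bword_length]
    rw [ih (m % 2 ^ a) (Nat.mod_lt _ h2)]
    by_cases h : 2 ^ a ≤ m
    · rw [Nat.mod_eq_sub_mod h, Nat.mod_eq_of_lt (by rw [pow_succ] at hm; omega)]
      simp [h]
    · rw [Nat.mod_eq_of_lt (by omega)]
      simp [h]

theorem csep_trans {u v z : List Bool} (h1 : Csep u v) (h2 : Csep v z) : Csep u z := by
  simp only [Csep] at *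
  have hp : (0:ℕ) < 2 ^ v.length := pow_pos (by norm_num) _
  have c1 : (bval u + 1) * 2 ^ z.length * 2 ^ v.length ≤
      bval z * 2 ^ u.length * 2 ^ v.length := by
    calc (bval u + 1) * 2 ^ z.length * 2 ^ v.length
        = ((bval u + 1) * 2 ^ v.length) * 2 ^ z.length := by ring
      _ ≤ (bval v * 2 ^ u.length) * 2 ^ z.length := Nat.mul_le_mul_right _ h1
      _ ≤ ((bval v + 1) * 2 ^ z.length) * 2 ^ u.length := by ring_nf; exact Nat.le_add_right _ _
      _ ≤ (bval z * 2 ^ v.length) * 2 ^ u.length := Nat.mul_le_mul_right _ h2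
      _ = bval z * 2 ^ u.length * 2 ^ v.length := by ring
  exact Nat.le_of_mul_le_mul_right c1 hp

/-- The numerator of `nsum ℓ i` over denominator `2 ^ ℓ i`. -/
def Mnum (ℓ : ℕ → ℕ) : ℕ → ℕ
  | 0 => 0
  | 1 => 0
  | i + 2 =>
      (Mnum ℓ (i + 1) / 2 ^ (ℓ (i + 1) - min (ℓ (i + 1)) (ℓ (i + 2))) + 1) *
        2 ^ (ℓ (i + 2) - min (ℓ (i + 1)) (ℓ (i + 2)))

theorem floor_nat_div_pow (M d : ℕ) : (⌊(M : ℝ) / 2 ^ d⌋ : ℝ) = ((M / 2 ^ d : ℕ) : ℝ) := by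
  have h0 : (0:ℝ) ≤ (M : ℝ) / 2 ^ d := by positivity
  have := Int.natCast_floor_eq_floor h0
  rw [← this]
  norm_cast
  exact_mod_cast Nat.floor_div_eq_div (K := ℝ) M (2 ^ d)

/-- Bridge: `nsum` equals `Mnum / 2 ^ ℓ`. -/
theorem nsum_eq_Mnum (ℓ : ℕ → ℕ) : ∀ i : ℕ,
    nsum ℓ (i + 1) = (Mnum ℓ (i + 1) : ℝ) / 2 ^ (ℓ (i + 1)) := by
  intro i
  induction i with
  | zero => simp [nsum, Mnum]
  | succ i ih =>
    have hL : (0:ℝ) < 2 ^ (ℓ (i + 1)) := by positivity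
    set α := min (ℓ (i + 1)) (ℓ (i + 2)) with hα
    have hd : ℓ (i + 1) = (ℓ (i + 1) - α) + α := by omega
    have he : ℓ (i + 2) = (ℓ (i + 2) - α) + α := by omega
    set d := ℓ (i + 1) - α
    set e := ℓ (i + 2) - α
    set M := Mnum ℓ (i + 1) with hM
    rw [show i + 1 + 1 = i + 2 from rfl, show nsum ℓ (i + 2) =
      trunc α (nsum ℓ (i + 1)) + (2:ℝ) ^ (-(α:ℤ)) from by rw [nsum]; norm_cast, ih]
    have key : (2:ℝ) ^ α * ((M:ℝ) / 2 ^ (ℓ (i + 1))) = (M:ℝ) / 2 ^ d := by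
      rw [hd, pow_add]
      field_simp
    rw [trunc, key, floor_nat_div_pow]
    have : (Mnum ℓ (i + 2) : ℝ) = ((M / 2 ^ d + 1 : ℕ) : ℝ) * 2 ^ e := by
      rw [show Mnum ℓ (i + 2) = (M / 2 ^ d + 1) * 2 ^ e from rfl]
      push_cast; ring
    rw [this, he, pow_add]
    rw [zpow_neg, zpow_natCast]
    push_cast
    field_simp

/-- The one-step separation inequality. -/
theorem Mnum_step (ℓ : ℕ → ℕ) (i : ℕ) :
    (Mnum ℓ (i + 1) + 1) * 2 ^ (ℓ (i + 2)) ≤ Mnum ℓ (i + 2) * 2 ^ (ℓ (i + 1)) := by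
  set α := min (ℓ (i + 1)) (ℓ (i + 2)) with hα
  have hd : ℓ (i + 1) = (ℓ (i + 1) - α) + α := by omega
  have he : ℓ (i + 2) = (ℓ (i + 2) - α) + α := by omega
  set d := ℓ (i + 1) - α
  set e := ℓ (i + 2) - α
  set M := Mnum ℓ (i + 1) with hM
  rw [show Mnum ℓ (i + 2) = (M / 2 ^ d + 1) * 2 ^ e from rfl]
  rw [hd, he, pow_add, pow_add]
  have hmod := Nat.div_add_mod M (2 ^ d)
  have hlt : M % 2 ^ d < 2 ^ d := Nat.mod_lt _ (pow_pos (by norm_num) d)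
  calc (M + 1) * (2 ^ e * 2 ^ α) ≤ ((M / 2 ^ d + 1) * 2 ^ d) * (2 ^ e * 2 ^ α) := by
        apply Nat.mul_le_mul_right
        have : (M / 2 ^ d + 1) * 2 ^ d = 2 ^ d * (M / 2 ^ d) + 2 ^ d := by ring
        omega
    _ = (M / 2 ^ d + 1) * 2 ^ e * (2 ^ d * 2 ^ α) := by ring

theorem sep_trans {a b c p q r : ℕ} (h1 : (a + 1) * 2 ^ q ≤ b * 2 ^ p)
    (h2 : (b + 1) * 2 ^ r ≤ c * 2 ^ q) : (a + 1) * 2 ^ r ≤ c * 2 ^ p := by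
  have hq : (0:ℕ) < 2 ^ q := pow_pos (by norm_num) q
  have : (a + 1) * 2 ^ r * 2 ^ q ≤ c * 2 ^ p * 2 ^ q := by
    calc (a + 1) * 2 ^ r * 2 ^ q = ((a + 1) * 2 ^ q) * 2 ^ r := by ring
      _ ≤ (b * 2 ^ p) * 2 ^ r := Nat.mul_le_mul_right _ h1
      _ ≤ ((b + 1) * 2 ^ r) * 2 ^ p := by ring_nf; exact Nat.le_add_right _ _
      _ ≤ (c * 2 ^ q) * 2 ^ p := Nat.mul_le_mul_right _ h2
      _ = c * 2 ^ p * 2 ^ q := by ring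
  exact Nat.le_of_mul_le_mul_right this hq

/-- Chain separation: for `1 ≤ i < j`. -/
theorem Mnum_chain (ℓ : ℕ → ℕ) (i : ℕ) : ∀ k : ℕ,
    (Mnum ℓ (i + 1) + 1) * 2 ^ (ℓ (i + 2 + k)) ≤ Mnum ℓ (i + 2 + k) * 2 ^ (ℓ (i + 1)) := by
  intro k
  induction k with
  | zero => exact Mnum_step ℓ i
  | succ k ih =>
    have hstep := Mnum_step ℓ (i + 1 + k)
    have : i + 1 + k + 1 = i + 2 + k := by omega
    rw [this] at hstep
    have : i + 1 + k + 2 = i + 2 + (k + 1) := by omega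
    rw [this] at hstep
    exact sep_trans ih hstep

theorem Mnum_le_step (ℓ : ℕ → ℕ) (k a b : ℕ) (hm : Mnum ℓ (k + 1) ≤ a)
    (h : (a + 1) * 2 ^ (ℓ (k + 2)) ≤ b * 2 ^ (ℓ (k + 1))) : Mnum ℓ (k + 2) ≤ b := by
  set α := min (ℓ (k + 1)) (ℓ (k + 2)) with hα
  set M := Mnum ℓ (k + 1) with hM
  rw [show Mnum ℓ (k + 2) = (M / 2 ^ (ℓ (k + 1) - α) + 1) * 2 ^ (ℓ (k + 2) - α) from rfl]
  rcases le_or_gt (ℓ (k + 1)) (ℓ (k + 2)) with h1 | h1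
  · have hd : ℓ (k + 1) - α = 0 := by omega
    have he : ℓ (k + 2) = (ℓ (k + 2) - α) + ℓ (k + 1) := by omega
    rw [hd, pow_zero, Nat.div_one]
    rw [he, pow_add, ← mul_assoc] at h
    have h2 : (a + 1) * 2 ^ (ℓ (k + 2) - α) ≤ b := Nat.le_of_mul_le_mul_right h (pow_pos (by norm_num) _)
    calc (M + 1) * 2 ^ (ℓ (k + 2) - α) ≤ (a + 1) * 2 ^ (ℓ (k + 2) - α) :=
          Nat.mul_le_mul_right _ (by omega)
      _ ≤ b := h2
  · have he : ℓ (k + 2) - α = 0 := by omega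
    have hd : ℓ (k + 1) = (ℓ (k + 1) - α) + ℓ (k + 2) := by omega
    set d := ℓ (k + 1) - α
    rw [he, pow_zero, mul_one]
    rw [hd, pow_add] at h
    have h2 : a + 1 ≤ b * 2 ^ d := by
      have := Nat.le_of_mul_le_mul_right (by linarith [h] : (a + 1) * 2 ^ (ℓ (k + 2)) ≤ (b * 2 ^ d) * 2 ^ (ℓ (k + 2))) (pow_pos (by norm_num : (0:ℕ) < 2) (ℓ (k + 2)))
      exact this
    have h3 : a / 2 ^ d < b := (Nat.div_lt_iff_lt_mul (pow_pos (by norm_num) d)).mpr (by omega)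
    have h4 : M / 2 ^ d ≤ a / 2 ^ d := Nat.div_le_div_right hm
    omega

/-- Nakatsu's condition: an alphabetic code with lengths ℓ₁,…,ℓₙ exists iff sum(L,n) < 1. -/
theorem nakatsu_condition (n : ℕ) (hn : 1 ≤ n) (ℓ : ℕ → ℕ)
    (hpos : ∀ i, 1 ≤ i → i ≤ n → 0 < ℓ i) :
    (∃ w : Fin n → List Bool, IsAlphabeticCode w ∧
        ∀ i : Fin n, (w i).length = ℓ (i.1 + 1)) ↔ nsum ℓ n < 1 := by
  obtain ⟨m, rfl⟩ : ∃ m, n = m + 1 := ⟨n - 1, by omega⟩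
  have hbridge := nsum_eq_Mnum ℓ m
  have hpow : (0:ℝ) < 2 ^ (ℓ (m + 1)) := by positivity
  constructor
  · rintro ⟨w, ⟨hpf, hlex⟩, hlen⟩
    have key : ∀ k, (hk : k < m + 1) → Mnum ℓ (k + 1) ≤ bval (w ⟨k, hk⟩) := by
      intro k
      induction k with
      | zero => intro hk; simp [Mnum]
      | succ k ih =>
        intro hk
        have hk' : k < m + 1 := by omega
        have hlt : (⟨k, hk'⟩ : Fin (m + 1)) < ⟨k + 1, hk⟩ := by
          simp [Fin.mk_lt_mk]
        have hne : (⟨k, hk'⟩ : Fin (m + 1)) ≠ ⟨k + 1, hk⟩ := ne_of_lt hlt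
        have hcs := good_csep (w ⟨k, hk'⟩) (w ⟨k + 1, hk⟩)
          (hlex _ _ hlt) (hpf _ _ hne) (hpf _ _ hne.symm)
        simp only [Csep, hlen ⟨k, hk'⟩, hlen ⟨k + 1, hk⟩] at hcs
        exact Mnum_le_step ℓ k _ _ (ih hk') hcs
    have h1 : Mnum ℓ (m + 1) ≤ bval (w ⟨m, by omega⟩) := key m (by omega)
    have h2 : bval (w ⟨m, by omega⟩) < 2 ^ (ℓ (m + 1)) := by
      have := bval_lt (w ⟨m, by omega⟩)
      rwa [hlen ⟨m, by omega⟩] at this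
    rw [hbridge, div_lt_one hpow]
    have : Mnum ℓ (m + 1) < 2 ^ (ℓ (m + 1)) := by omega
    exact_mod_cast this
  · intro h
    rw [hbridge, div_lt_one hpow] at h
    have hMn : Mnum ℓ (m + 1) < 2 ^ (ℓ (m + 1)) := by exact_mod_cast h
    have hMk : ∀ k, k < m + 1 → Mnum ℓ (k + 1) < 2 ^ (ℓ (k + 1)) := by
      intro k hk
      rcases eq_or_lt_of_le (Nat.succ_le_of_lt hk) with heq | hlt
      · rw [show k + 1 = m + 1 from heq]; exact hMn
      · have hc := Mnum_chain ℓ k (m + 1 - (k + 2))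
        have : k + 2 + (m + 1 - (k + 2)) = m + 1 := by omega
        rw [this] at hc
        have : (Mnum ℓ (k + 1) + 1) * 2 ^ (ℓ (m + 1)) < 2 ^ (ℓ (k + 1)) * 2 ^ (ℓ (m + 1)) := by
          calc (Mnum ℓ (k + 1) + 1) * 2 ^ (ℓ (m + 1)) ≤ Mnum ℓ (m + 1) * 2 ^ (ℓ (k + 1)) := hc
            _ < 2 ^ (ℓ (m + 1)) * 2 ^ (ℓ (k + 1)) := by
                exact Nat.mul_lt_mul_of_lt_of_le hMn (le_refl _) (pow_pos (by norm_num) _)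
            _ = 2 ^ (ℓ (k + 1)) * 2 ^ (ℓ (m + 1)) := by ring
        have := Nat.lt_of_mul_lt_mul_right this
        omega
    set w : Fin (m + 1) → List Bool :=
      fun i => bword (ℓ (i.1 + 1)) (Mnum ℓ (i.1 + 1)) with hw
    have hval : ∀ i : Fin (m + 1), bval (w i) = Mnum ℓ (i.1 + 1) :=
      fun i => bword_bval _ _ (hMk i.1 i.2)
    have hlen : ∀ i : Fin (m + 1), (w i).length = ℓ (i.1 + 1) :=
      fun i => bword_length _ _
    have hsep : ∀ i j : Fin (m + 1), i < j → Csep (w i) (w j) := by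
      intro i j hij
      have hij' : i.1 < j.1 := hij
      simp only [Csep, hval, hlen]
      have hc := Mnum_chain ℓ i.1 (j.1 - i.1 - 1)
      have : i.1 + 2 + (j.1 - i.1 - 1) = j.1 + 1 := by omega
      rwa [this] at hc
    refine ⟨w, ⟨?_, ?_⟩, hlen⟩
    · intro i j hne
      rcases lt_trichotomy i j with hij | hij | hij
      · exact (csep_good _ _ (hsep i j hij)).2.1
      · exact absurd hij hne
      · exact (csep_good _ _ (hsep j i hij)).2.2
    · intro i j hij
      exact (csep_good _ _ (hsep i j hij)).1
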